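/- arXiv:2006.11054 — 12 statements merged into one kernel-verified Lean document; each statement's English description precedes it below -/
import Mathlib

section
/- Let p be a prime number, M the ℤ-module ℤ(p^∞) (the Prüfer p-group, i.e. the p-primary component of ℚ/ℤ), and S = {p^n : n ∈ ℕ ∪ {0}} the multiplicatively closed subset of ℤ generated by p. Then M is a fully S-idempotent ℤ-module but M is not a fully idempotent ℤ-module. -/
open Pointwise
/-- A submodule `N` of `M` is `S`-idempotent if there is `s ∈ S` with
`s • N ⊆ (N :_R M)² M ⊆ N`. -/
def Submodule.SIdempotent {R M : Type*} [CommRing R] [AddCommGroup M] [Module R M]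
    (S : Submonoid R) (N : Submodule R M) : Prop :=
  ∃ s ∈ S, s • N ≤ (N.colon ⊤) ^ 2 • (⊤ : Submodule R M) ∧
    (N.colon ⊤) ^ 2 • (⊤ : Submodule R M) ≤ N

/-- `M` is fully `S`-idempotent if every submodule is `S`-idempotent. -/
def Module.FullySIdempotent (R M : Type*) [CommRing R] [AddCommGroup M] [Module R M]
    (S : Submonoid R) : Prop :=
  ∀ N : Submodule R M, N.SIdempotent S

/-- `M` is fully idempotent if every submodule `N` equals `(N :_R M)² M`. -/
def Module.FullyIdempotent (R M : Type*) [CommRing R] [AddCommGroup M] [Module R M] : Prop :=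
  ∀ N : Submodule R M, N = (N.colon ⊤) ^ 2 • (⊤ : Submodule R M)

/-- The Prüfer `p`-group `ℤ(p^∞)`, realized as the subgroup of `ℚ/ℤ` consisting of the
elements annihilated by a power of `p`. -/
def pruferGroup (p : ℕ) : Submodule ℤ (ℚ ⧸ Submodule.span ℤ {(1 : ℚ)}) where
  carrier := {x | ∃ n : ℕ, (p : ℤ) ^ n • x = 0}
  zero_mem' := ⟨0, smul_zero _⟩
  add_mem' := fun {x y} hx hy => by
    obtain ⟨n, hn⟩ := hx
    obtain ⟨m, hm⟩ := hy
    exact ⟨n + m, by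
      rw [smul_add, pow_add, mul_smul, mul_smul, smul_comm ((p : ℤ) ^ n) ((p : ℤ) ^ m) x, hn, hm,
        smul_zero, smul_zero, add_zero]⟩
  smul_mem' := fun c x hx => by
    obtain ⟨n, hn⟩ := hx
    exact ⟨n, by rw [smul_comm, hn, smul_zero]⟩

/-!
An element of `ℤ(p^∞) ⊆ ℚ/ℤ` is the class of a fraction with denominator `p^m`, and by Bézout
it generates every class whose denominator divides `p^m`; so the cyclic submodules form a chain.
A proper submodule `N` therefore lies in a cyclic one and is killed by some `p^k`, which makes
`N` `S`-idempotent with `s = p^k`. On the other hand `ℤ(p^∞)` is a faithful `ℤ`-module (it has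
elements of order `p^n` for every `n`), so such an `N` has `(N :_ℤ M) = 0`, and
`(N :_ℤ M)² M = 0 ≠ N` for any nonzero cyclic `N`.
-/

namespace Submodule

variable {R M : Type*} [CommRing R] [AddCommGroup M] [Module R M]

theorem colon_top_pow_two_smul_top_le (N : Submodule R M) :
    (N.colon ⊤) ^ 2 • (⊤ : Submodule R M) ≤ N :=
  (smul_mono_left (Ideal.pow_le_self two_ne_zero)).trans <|
    smul_le.mpr fun _ hr x _ => mem_colon.mp hr x trivial

theorem sIdempotent_top (S : Submonoid R) : (⊤ : Submodule R M).SIdempotent S :=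
  ⟨1, S.one_mem, by simp [Ideal.top_pow], le_top⟩

theorem sIdempotent_of_le_torsionBy {S : Submonoid R} {s : R} (hs : s ∈ S)
    {N : Submodule R M} (hN : N ≤ torsionBy R M s) : N.SIdempotent S := by
  refine ⟨s, hs, fun x hx => ?_, N.colon_top_pow_two_smul_top_le⟩
  obtain ⟨y, hy, rfl⟩ := (mem_smul_pointwise_iff_exists x s N).mp hx
  rw [(mem_torsionBy_iff s y).mp (hN hy)]
  exact zero_mem _

theorem colon_top_eq_bot_of_le_torsionBy [NoZeroDivisors R] [FaithfulSMul R M] {s : R}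
    (hs : s ≠ 0) {N : Submodule R M} (hN : N ≤ torsionBy R M s) : N.colon ⊤ = ⊥ := by
  refine eq_bot_iff.mpr fun r hr => (Ideal.mem_bot).mpr ?_
  have hsr : s * r = 0 := eq_of_smul_eq_smul (α := M) fun x => by
    rw [mul_smul, zero_smul, ← mem_torsionBy_iff]
    exact hN (mem_colon.mp hr x trivial)
  exact (mul_eq_zero.mp hsr).resolve_left hs

theorem exists_le_span_singleton_of_ne_top (hchain : ∀ x y : M, x ∈ R ∙ y ∨ y ∈ R ∙ x)
    {N : Submodule R M} (hN : N ≠ ⊤) : ∃ x, N ≤ R ∙ x := by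
  obtain ⟨x, hx⟩ : ∃ x, x ∉ N := by simpa [eq_top_iff'] using hN
  refine ⟨x, fun y hy => (hchain x y).resolve_left fun hxy => hx ?_⟩
  exact (span_singleton_le_iff_mem y N).mpr hy hxy

end Submodule

theorem Module.FullyIdempotent.eq_bot_of_colon_top_eq_bot {R M : Type*} [CommRing R]
    [AddCommGroup M] [Module R M] (h : Module.FullyIdempotent R M) {N : Submodule R M}
    (hN : N.colon ⊤ = ⊥) : N = ⊥ := by
  rw [h N, hN]
  simp

section RatModInt

local notation "ℚ⧸ℤ" => ℚ ⧸ Submodule.span ℤ {(1 : ℚ)}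

theorem RatModInt.mk_eq_zero_iff (q : ℚ) :
    (Submodule.Quotient.mk q : ℚ⧸ℤ) = 0 ↔ q.den = 1 := by
  rw [Submodule.Quotient.mk_eq_zero, Submodule.mem_span_singleton, Rat.den_eq_one_iff]
  constructor
  · rintro ⟨a, rfl⟩
    simp
  · exact fun h => ⟨q.num, by simpa using h⟩

theorem RatModInt.zsmul_mk_eq_zero_iff (a : ℤ) (q : ℚ) :
    a • (Submodule.Quotient.mk q : ℚ⧸ℤ) = 0 ↔ (q.den : ℤ) ∣ a := by
  have haq : a • q = ((a * q.num : ℤ) : ℚ) / (q.den : ℤ) := by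
    rw [zsmul_eq_mul, Int.cast_mul, mul_div_assoc, Int.cast_natCast, Rat.num_div_den]
  rw [← Submodule.Quotient.mk_smul, mk_eq_zero_iff, haq,
    Rat.den_div_intCast_eq_one_iff _ _ (by exact_mod_cast q.den_nz)]
  exact ⟨(Rat.isCoprime_num_den q).symm.dvd_of_dvd_mul_right, (Dvd.dvd.mul_right · _)⟩

theorem RatModInt.mk_mem_span_mk_of_den_dvd {q r : ℚ} (h : q.den ∣ r.den) :
    (Submodule.Quotient.mk q : ℚ⧸ℤ) ∈ ℤ ∙ Submodule.Quotient.mk r := by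
  obtain ⟨t, ht⟩ := h
  obtain ⟨u, v, huv⟩ := Rat.isCoprime_num_den r
  have huv' : (u : ℚ) * r.num + v * r.den = 1 := by exact_mod_cast huv
  have ht' : (r.den : ℚ) = q.den * t := by exact_mod_cast ht
  refine Submodule.mem_span_singleton.mpr ⟨q.num * t * u, ?_⟩
  rw [← Submodule.Quotient.mk_smul, Submodule.Quotient.eq, Submodule.mem_span_singleton]
  refine ⟨-(q.num * t * v), ?_⟩
  -- Bézout `u * r.num + v * r.den = 1` and `r.den = q.den * t` give
  -- `q.num * t * u • r ≡ q` mod `ℤ`.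
  rw [zsmul_eq_mul, zsmul_eq_mul, mul_one]
  push_cast
  linear_combination (t * u * r + t * v) * q.mul_den_eq_num - (q * u) * r.mul_den_eq_num
    - q * huv' + (q * u * r + q * v) * ht'

namespace pruferGroup

variable {p : ℕ}

theorem exists_pow_smul_eq_zero (x : pruferGroup p) : ∃ n : ℕ, (p : ℤ) ^ n • x = 0 :=
  x.2.imp fun _ hn => Subtype.ext hn

theorem mk_mem_iff (q : ℚ) :
    (Submodule.Quotient.mk q : ℚ⧸ℤ) ∈ pruferGroup p ↔ ∃ n : ℕ, q.den ∣ p ^ n :=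
  exists_congr fun n => by
    rw [RatModInt.zsmul_mk_eq_zero_iff, ← Int.natCast_pow, Int.natCast_dvd_natCast]

theorem exists_mk_eq_and_den_eq_pow (hp : p.Prime) {x : ℚ⧸ℤ} (hx : x ∈ pruferGroup p) :
    ∃ (q : ℚ) (m : ℕ), Submodule.Quotient.mk q = x ∧ q.den = p ^ m := by
  obtain ⟨q, rfl⟩ := Submodule.Quotient.mk_surjective _ x
  obtain ⟨n, hn⟩ := (mk_mem_iff q).mp hx
  obtain ⟨m, -, hm⟩ := (Nat.dvd_prime_pow hp).mp hn
  exact ⟨q, m, rfl, hm⟩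

theorem mem_span_singleton_or (hp : p.Prime) (x y : pruferGroup p) :
    x ∈ ℤ ∙ y ∨ y ∈ ℤ ∙ x := by
  have mem_span_of_le {x y : pruferGroup p} {q r : ℚ} {m n : ℕ}
      (hq : Submodule.Quotient.mk q = (x : ℚ⧸ℤ))
      (hr : Submodule.Quotient.mk r = (y : ℚ⧸ℤ))
      (hm : q.den = p ^ m) (hn : r.den = p ^ n) (hmn : m ≤ n) : x ∈ ℤ ∙ y := by
    have hqr := RatModInt.mk_mem_span_mk_of_den_dvd (hm ▸ hn ▸ Nat.pow_dvd_pow p hmn)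
    rw [hq, hr, Submodule.mem_span_singleton] at hqr
    obtain ⟨a, ha⟩ := hqr
    exact Submodule.mem_span_singleton.mpr ⟨a, Subtype.ext ha⟩
  obtain ⟨q, m, hq, hm⟩ := exists_mk_eq_and_den_eq_pow hp x.2
  obtain ⟨r, n, hr, hn⟩ := exists_mk_eq_and_den_eq_pow hp y.2
  rcases le_total m n with hmn | hnm
  · exact .inl (mem_span_of_le hq hr hm hn hmn)
  · exact .inr (mem_span_of_le hr hq hn hm hnm)

theorem faithfulSMul (hp : 1 < p) : FaithfulSMul ℤ (pruferGroup p) := by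
  refine ⟨fun {a b} h => sub_eq_zero.mp ?_⟩
  set n := (a - b).natAbs
  have hden : (((p ^ n : ℕ) : ℚ)⁻¹).den = p ^ n := Rat.inv_natCast_den_of_pos (by positivity)
  have hmem : (Submodule.Quotient.mk ((p ^ n : ℕ) : ℚ)⁻¹ : ℚ⧸ℤ) ∈ pruferGroup p :=
    (mk_mem_iff _).mpr ⟨n, hden.dvd⟩
  have hdvd : (p : ℤ) ^ n ∣ a - b := by
    rw [← Nat.cast_pow, ← hden, ← RatModInt.zsmul_mk_eq_zero_iff, sub_smul]
    exact sub_eq_zero.mpr (congrArg Subtype.val (h ⟨_, hmem⟩))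
  refine Int.eq_zero_of_dvd_of_natAbs_lt_natAbs hdvd ?_
  rw [Int.natAbs_pow, Int.natAbs_natCast]
  exact Nat.lt_pow_self hp

end pruferGroup

end RatModInt

/-- The Prüfer group `ℤ(p^∞)` is a fully `S`-idempotent `ℤ`-module for
`S = {pⁿ : n ∈ ℕ}`, but it is not a fully idempotent `ℤ`-module. -/
theorem pruferGroup_fullySIdempotent_not_fullyIdempotent (p : ℕ) (hp : p.Prime) :
    Module.FullySIdempotent ℤ (pruferGroup p) (Submonoid.powers (p : ℤ)) ∧
      ¬ Module.FullyIdempotent ℤ (pruferGroup p) := by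
  have := pruferGroup.faithfulSMul hp.one_lt
  have cyclic_le_torsionBy (x : pruferGroup p) :
      ∃ n : ℕ, ℤ ∙ x ≤ Submodule.torsionBy ℤ (pruferGroup p) ((p : ℤ) ^ n) :=
    (pruferGroup.exists_pow_smul_eq_zero x).imp fun _ hn =>
      (Submodule.span_singleton_le_iff_mem _ _).mpr hn
  refine ⟨fun N => ?_, fun h => ?_⟩
  · rcases eq_or_ne N ⊤ with rfl | hN
    · exact Submodule.sIdempotent_top _
    obtain ⟨x, hNx⟩ :=
      Submodule.exists_le_span_singleton_of_ne_top (pruferGroup.mem_span_singleton_or hp) hN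
    obtain ⟨n, hx⟩ := cyclic_le_torsionBy x
    exact Submodule.sIdempotent_of_le_torsionBy (pow_mem (Submonoid.mem_powers _) n) (hNx.trans hx)
  · obtain ⟨x, hx⟩ : ∃ x : pruferGroup p, x ≠ 0 := by
      by_contra! h0
      exact one_ne_zero
        (eq_of_smul_eq_smul (M := ℤ) (α := pruferGroup p) fun _ => (h0 _).trans (h0 _).symm)
    obtain ⟨n, hxn⟩ := cyclic_le_torsionBy x
    have hcolon := Submodule.colon_top_eq_bot_of_le_torsionBy
      (pow_ne_zero n (Int.natCast_ne_zero.mpr hp.ne_zero)) hxn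
    exact hx (Submodule.span_singleton_eq_bot.mp (h.eq_bot_of_colon_top_eq_bot hcolon))
end

section
/- Let R be a commutative ring with identity, S a multiplicatively closed subset of R, and M an R-module. Then M is a fully S-idempotent R-module if and only if M is a fully S*-idempotent R-module, where S* = {x ∈ R : x/1 is a unit of S⁻¹R} is the saturation of S. -/
open Pointwise
/-- The saturation `S* = {x ∈ R : x/1 is a unit of S⁻¹R}` of `S`. -/
def Submonoid.locSaturation {R : Type*} [CommRing R] (S : Submonoid R) : Submonoid R where
  carrier := {x : R | IsUnit (algebraMap R (Localization S) x)}
  one_mem' := by simp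
  mul_mem' := fun hx hy => by simpa [map_mul] using hx.mul hy

/- The idempotency condition `s • N ≤ (N :_R M)² M` only gets weaker when `s` is replaced
by a multiple, and every element of `S*` divides an element of `S`; so `S` and `S*` admit
the same idempotent submodules. -/

namespace Submonoid

variable {R : Type*} [CommRing R] (S : Submonoid R)

theorem mem_locSaturation_iff {x : R} : x ∈ S.locSaturation ↔ ∃ s ∈ S, x ∣ s :=
  IsLocalization.algebraMap_isUnit_iff S

theorem le_locSaturation : S ≤ S.locSaturation := fun s hs =>
  (S.mem_locSaturation_iff).mpr ⟨s, hs, dvd_rfl⟩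

end Submonoid

section

variable {R M : Type*} [CommRing R] [AddCommGroup M] [Module R M]

theorem Submodule.smul_le_of_dvd {a b : R} (hab : a ∣ b) {N P : Submodule R M}
    (h : a • N ≤ P) : b • N ≤ P := by
  obtain ⟨c, rfl⟩ := hab
  calc (a * c) • N = c • a • N := by rw [mul_comm, mul_smul]
    _ ≤ a • N := Submodule.smul_le_self_of_tower c (a • N)
    _ ≤ P := h

theorem Submodule.SIdempotent.of_forall_dvd {S T : Submonoid R}
    (hST : ∀ s ∈ S, ∃ t ∈ T, s ∣ t) {N : Submodule R M} (hN : N.SIdempotent S) :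
    N.SIdempotent T := by
  obtain ⟨s, hs, hsN, hle⟩ := hN
  obtain ⟨t, ht, hst⟩ := hST s hs
  exact ⟨t, ht, Submodule.smul_le_of_dvd hst hsN, hle⟩

theorem Module.FullySIdempotent.of_forall_dvd {S T : Submonoid R}
    (hST : ∀ s ∈ S, ∃ t ∈ T, s ∣ t) (hM : Module.FullySIdempotent R M S) :
    Module.FullySIdempotent R M T :=
  fun N => (hM N).of_forall_dvd hST

end

/-- `M` is fully `S`-idempotent iff `M` is fully `S*`-idempotent, where `S*` is the
saturation of `S`. -/
theorem fullySIdempotent_iff_saturation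
    {R M : Type*} [CommRing R] [AddCommGroup M] [Module R M] (S : Submonoid R) :
    Module.FullySIdempotent R M S ↔ Module.FullySIdempotent R M S.locSaturation :=
  ⟨.of_forall_dvd fun s hs => ⟨s, S.le_locSaturation hs, dvd_rfl⟩,
    .of_forall_dvd fun _ hx => (S.mem_locSaturation_iff).mp hx⟩
end

section
/- Let R be a commutative ring with identity, S a multiplicatively closed subset of R, and M a fully S-idempotent R-module. Then every submodule N of M is itself a fully S-idempotent R-module (i.e., for every submodule K of N there exists s ∈ S with sK ⊆ (K :_R N)²N ⊆ K). -/
open Pointwise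
/-- If `M` is fully `S`-idempotent, then every submodule `N` of `M` is itself a fully
`S`-idempotent module: for every submodule `K ⊆ N` there is `s ∈ S` with
`s • K ⊆ (K :_R N)² N ⊆ K`. -/
theorem fullySIdempotent_submodule
    {R M : Type*} [CommRing R] [AddCommGroup M] [Module R M] (S : Submonoid R)
    (h : Module.FullySIdempotent R M S) :
    ∀ N K : Submodule R M, K ≤ N →
      ∃ s ∈ S, s • K ≤ (K.colon N) ^ 2 • N ∧ (K.colon N) ^ 2 • N ≤ K := by
  intro N K hKN
  obtain ⟨s, hsS, h1, h2⟩ := h K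
  set I := K.colon (⊤ : Submodule R M) with hI
  have hItop : I • (⊤ : Submodule R M) ≤ K :=
    Submodule.smul_le.2 fun r hr n _ => Submodule.mem_colon.1 hr n trivial
  have hIle : I ≤ K.colon N := fun r hr =>
    Submodule.mem_colon.2 fun p _ => Submodule.mem_colon.1 hr p trivial
  have hsq : I ^ 2 • (⊤ : Submodule R M) ≤ I • K := by
    rw [pow_two, mul_smul]
    exact Submodule.smul_mono le_rfl hItop
  have sK_le : ∀ k ∈ K, s • k ∈ I • K := fun k hk => by
    refine hsq (h1 ?_)
    exact Submodule.smul_mem_pointwise_smul k s K hk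
  refine ⟨s * s, S.mul_mem hsS hsS, ?_, ?_⟩
  · intro x hx
    obtain ⟨k, hk, rfl⟩ := Set.mem_smul_set.1 hx
    have hIN : (I ^ 2) • N ≤ (K.colon N) ^ 2 • N :=
      Submodule.smul_mono_left (Ideal.pow_right_mono hIle 2)
    apply hIN
    have : s • k ∈ I • K := sK_le k hk
    rw [mul_smul]
    refine Submodule.smul_induction_on this (fun r hr n hn => ?_) (fun x y hx hy => ?_)
    · rw [smul_smul, mul_comm, ← smul_smul, pow_two, mul_smul]
      exact Submodule.smul_mem_smul hr
        (Submodule.smul_mono le_rfl hKN (sK_le n hn))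
    · rw [smul_add]; exact Submodule.add_mem _ hx hy
  · rw [pow_two, mul_smul]
    have hCN : (K.colon N) • N ≤ K :=
      Submodule.smul_le.2 fun r hr n hn => Submodule.mem_colon.1 hr n hn
    refine le_trans (Submodule.smul_mono le_rfl hCN) ?_
    exact Submodule.smul_le.2 fun r hr k hk => K.smul_mem r hk
end

section
/- Let R be a commutative ring with identity and M an R-module. The following statements are equivalent: (a) M is a fully idempotent R-module; (b) M is a fully (R∖𝔭)-idempotent R-module for each prime ideal 𝔭 of R; (c) M is a fully (R∖𝔪)-idempotent R-module for each maximal ideal 𝔪 of R; (d) M is a fully (R∖𝔪)-idempotent R-module for each maximal ideal 𝔪 of R with M_𝔪 ≠ 0. -/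
open Pointwise
/-!
A submodule `N` always contains `(N :_R M)² M`, so full idempotence is the reverse inclusion
`N ≤ (N :_R M)² M`. An inclusion `N ≤ K` is local: if `x ∈ N` is not in `K`, the ideal
`(K :_R x)` is proper, hence lies in a maximal ideal `𝔪`; it contains the annihilator of `x`,
so `M_𝔪 ≠ 0`, and no `s ∉ 𝔪` can push `x` into `K`.
-/

section

variable {R M : Type*} [CommRing R] [AddCommGroup M] [Module R M]

theorem Submodule.colon_top_smul_top_le (N : Submodule R M) :
    N.colon ⊤ • (⊤ : Submodule R M) ≤ N :=
  Submodule.smul_le.2 fun _ hr m _ => Submodule.mem_colon.1 hr m trivial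

theorem Submodule.colon_top_sq_smul_top_le (N : Submodule R M) :
    (N.colon ⊤) ^ 2 • (⊤ : Submodule R M) ≤ N :=
  (Submodule.smul_mono_left (Ideal.pow_le_self two_ne_zero)).trans N.colon_top_smul_top_le

theorem Module.FullyIdempotent.fullySIdempotent (h : Module.FullyIdempotent R M)
    (S : Submonoid R) : Module.FullySIdempotent R M S :=
  fun N => ⟨1, S.one_mem, by rw [one_smul, ← h N], (h N).ge⟩

theorem Submodule.exists_isMaximal_colon_singleton_le {K : Submodule R M} {x : M} (hx : x ∉ K) :
    ∃ m : Ideal R, m.IsMaximal ∧ K.colon {x} ≤ m :=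
  Ideal.exists_le_maximal _ fun h => hx <| by simpa using (K.colon_eq_top_iff_subset _).1 h

theorem Module.nontrivial_localizedModule_of_colon_singleton_le (K : Submodule R M) (x : M)
    (p : Ideal R) [p.IsPrime] (hp : K.colon {x} ≤ p) :
    Nontrivial (LocalizedModule p.primeCompl M) :=
  (Module.mem_support_iff_exists_annihilator (p := ⟨p, ‹_›⟩)).2
    ⟨x, by rw [← Submodule.bot_colon']; exact (Submodule.colon_mono bot_le subset_rfl).trans hp⟩

theorem Submodule.le_of_forall_isMaximal_exists_smul_le {N K : Submodule R M}
    (h : ∀ (m : Ideal R) (hm : m.IsMaximal),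
      Nontrivial (LocalizedModule (@Ideal.primeCompl R _ m hm.isPrime) M) →
        ∃ s ∉ m, s • N ≤ K) :
    N ≤ K := by
  intro x hxN
  by_contra hxK
  obtain ⟨m, hm, hxm⟩ := Submodule.exists_isMaximal_colon_singleton_le hxK
  obtain ⟨s, hsm, hsN⟩ :=
    h m hm (Module.nontrivial_localizedModule_of_colon_singleton_le K x m hxm)
  have hsx : s • x ∈ K := hsN (Submodule.smul_mem_pointwise_smul x s N hxN)
  exact hsm (hxm (Submodule.mem_colon_singleton.2 hsx))

theorem Module.fullyIdempotent_of_forall_isMaximal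
    (h : ∀ (m : Ideal R) (hm : m.IsMaximal),
      Nontrivial (LocalizedModule (@Ideal.primeCompl R _ m hm.isPrime) M) →
        Module.FullySIdempotent R M (@Ideal.primeCompl R _ m hm.isPrime)) :
    Module.FullyIdempotent R M := fun N =>
  le_antisymm
    (Submodule.le_of_forall_isMaximal_exists_smul_le fun m hm hM =>
      let ⟨s, hs, hsN, _⟩ := h m hm hM N
      ⟨s, hs, hsN⟩)
    N.colon_top_sq_smul_top_le

end

/-- `M` is fully idempotent iff it is fully `(R∖𝔭)`-idempotent for every prime `𝔭`, iff it
is fully `(R∖𝔪)`-idempotent for every maximal `𝔪`, iff it is fully `(R∖𝔪)`-idempotent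
for every maximal `𝔪` with `M_𝔪 ≠ 0`. -/
theorem fullyIdempotent_iff_localized
    {R M : Type*} [CommRing R] [AddCommGroup M] [Module R M] :
    (Module.FullyIdempotent R M ↔
      ∀ (p : Ideal R) (hp : p.IsPrime),
        Module.FullySIdempotent R M (@Ideal.primeCompl R _ p hp)) ∧
    (Module.FullyIdempotent R M ↔
      ∀ (m : Ideal R) (hm : m.IsMaximal),
        Module.FullySIdempotent R M (@Ideal.primeCompl R _ m hm.isPrime)) ∧
    (Module.FullyIdempotent R M ↔
      ∀ (m : Ideal R) (hm : m.IsMaximal),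
        Nontrivial (LocalizedModule (@Ideal.primeCompl R _ m hm.isPrime) M) →
          Module.FullySIdempotent R M (@Ideal.primeCompl R _ m hm.isPrime)) := by
  refine ⟨⟨fun h p hp => h.fullySIdempotent _, fun h => ?_⟩,
    ⟨fun h m hm => h.fullySIdempotent _, fun h => ?_⟩,
    ⟨fun h m hm _ => h.fullySIdempotent _, Module.fullyIdempotent_of_forall_isMaximal⟩⟩
  · exact Module.fullyIdempotent_of_forall_isMaximal fun m hm _ => h m hm.isPrime
  · exact Module.fullyIdempotent_of_forall_isMaximal fun m hm _ => h m hm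
end

section
/- Let R be a commutative ring with identity, S a multiplicatively closed subset of R, M an R-module, and N an S-idempotent submodule of M. Then there exists s ∈ S such that sN ⊆ Hom_R(M,N)N, where Hom_R(M,N)N = Σ{φ(N) : φ ∈ Hom_R(M,N)} is the submodule of M generated by the images φ(N) over all R-linear maps φ : M → N. -/
open Pointwise
/-- If `N` is an `S`-idempotent submodule of `M`, then there is `s ∈ S` with
`s • N ⊆ Hom_R(M,N)N = Σ {φ(N) : φ : M →ₗ[R] N}`. -/
theorem sSmul_le_hom_smul_of_sIdempotent
    {R M : Type*} [CommRing R] [AddCommGroup M] [Module R M] (S : Submonoid R)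
    (N : Submodule R M) (hN : N.SIdempotent S) :
    ∃ s ∈ S, s • N ≤ ⨆ φ : M →ₗ[R] N, (N.map φ).map N.subtype := by
  obtain ⟨s, hs, h1, h2⟩ := hN
  refine ⟨s, hs, h1.trans ?_⟩
  rw [pow_two]
  refine Submodule.smul_le.2 fun r hr m _ => ?_
  refine Submodule.mul_induction_on hr (fun a ha b hb => ?_) (fun x y hx hy => ?_)
  · have haN : ∀ x : M, a • x ∈ N := fun x =>
      (Submodule.mem_colon.1 ha) x trivial
    set φ : M →ₗ[R] N := LinearMap.codRestrict N (a • LinearMap.id) haN with hφ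
    have hbm : b • m ∈ N := (Submodule.mem_colon.1 hb) m trivial
    refine le_iSup (fun φ : M →ₗ[R] N => (N.map φ).map N.subtype) φ ?_
    exact Submodule.mem_map.2 ⟨φ (b • m), Submodule.mem_map.2 ⟨b • m, hbm, rfl⟩,
      by simp [hφ, mul_smul, smul_comm a b]⟩
  · rw [add_smul]
    exact Submodule.add_mem _ hx hy
end

section
/- Let R₁, R₂ be commutative rings with identity, Mᵢ an Rᵢ-module and Sᵢ ⊆ Rᵢ a multiplicatively closed subset for i = 1, 2. Set M = M₁ × M₂, R = R₁ × R₂, and S = S₁ × S₂. Then M is a fully S-idempotent R-module if and only if M₁ is a fully S₁-idempotent R₁-module and M₂ is a fully S₂-idempotent R₂-module. -/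
open Pointwise
section ProdModule

variable {R₁ R₂ M₁ M₂ : Type*} [CommRing R₁] [CommRing R₂]
  [AddCommGroup M₁] [Module R₁ M₁] [AddCommGroup M₂] [Module R₂ M₂]

/-- Componentwise scalar multiplication of `R₁ × R₂` on `M₁ × M₂`. -/
instance Prod.instSMulProdProd : SMul (R₁ × R₂) (M₁ × M₂) :=
  ⟨fun r m => (r.1 • m.1, r.2 • m.2)⟩

@[simp] theorem Prod.prod_smul_def (r : R₁ × R₂) (m : M₁ × M₂) :
    r • m = (r.1 • m.1, r.2 • m.2) := rfl

/-- `M₁ × M₂` is an `R₁ × R₂`-module with componentwise operations. -/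
instance Prod.instModuleProdProd : Module (R₁ × R₂) (M₁ × M₂) where
  one_smul m := by ext <;> simp
  mul_smul r s m := by ext <;> simp [mul_smul]
  smul_zero r := by ext <;> simp
  smul_add r m n := by ext <;> simp
  add_smul r s m := by ext <;> simp [add_smul]
  zero_smul m := by ext <;> simp

end ProdModule

/-!
Over `R₁ × R₂` the idempotents `(1, 0)` and `(0, 1)` split every submodule of `M₁ × M₂` as a
product `N₁ × N₂`. For products, the colon ideal, powers of ideals acting on submodules, and
scalar multiples by `s = (s₁, s₂)` are all computed componentwise, so the two inclusions defining
`S₁ × S₂`-idempotency of `N₁ × N₂` are exactly those defining `S₁`-idempotency of `N₁` together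
with those defining `S₂`-idempotency of `N₂`.
-/

section ProdProd

variable {R₁ R₂ M₁ M₂ : Type*} [CommRing R₁] [CommRing R₂]
  [AddCommGroup M₁] [Module R₁ M₁] [AddCommGroup M₂] [Module R₂ M₂]

namespace Submodule

/-- Unlike `Submodule.prod`, whose factors are modules over one ring, this is a submodule over
the product ring `R₁ × R₂`. -/
def prodProd (P : Submodule R₁ M₁) (Q : Submodule R₂ M₂) :
    Submodule (R₁ × R₂) (M₁ × M₂) where
  carrier := {x | x.1 ∈ P ∧ x.2 ∈ Q}
  add_mem' hx hy := ⟨P.add_mem hx.1 hy.1, Q.add_mem hx.2 hy.2⟩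
  zero_mem' := ⟨P.zero_mem, Q.zero_mem⟩
  smul_mem' r _ hx := ⟨P.smul_mem r.1 hx.1, Q.smul_mem r.2 hx.2⟩

@[simp] lemma mem_prodProd {P : Submodule R₁ M₁} {Q : Submodule R₂ M₂} {x : M₁ × M₂} :
    x ∈ prodProd P Q ↔ x.1 ∈ P ∧ x.2 ∈ Q := Iff.rfl

@[simp] lemma prodProd_top_top :
    prodProd (⊤ : Submodule R₁ M₁) (⊤ : Submodule R₂ M₂) = ⊤ := by
  ext; simp

lemma prodProd_le_prodProd_iff {P P' : Submodule R₁ M₁} {Q Q' : Submodule R₂ M₂} :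
    prodProd P Q ≤ prodProd P' Q' ↔ P ≤ P' ∧ Q ≤ Q' := by
  refine ⟨fun h => ⟨fun x hx => ?_, fun y hy => ?_⟩, fun h _ hx => ⟨h.1 hx.1, h.2 hx.2⟩⟩
  · exact (h (x := (x, 0)) ⟨hx, Q.zero_mem⟩).1
  · exact (h (x := (0, y)) ⟨P.zero_mem, hy⟩).2

def fstProd (N : Submodule (R₁ × R₂) (M₁ × M₂)) : Submodule R₁ M₁ where
  carrier := {x | (x, 0) ∈ N}
  add_mem' hx hy := by simpa using N.add_mem hx hy
  zero_mem' := N.zero_mem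
  smul_mem' r _ hx := by simpa using N.smul_mem (r, 0) hx

def sndProd (N : Submodule (R₁ × R₂) (M₁ × M₂)) : Submodule R₂ M₂ where
  carrier := {y | (0, y) ∈ N}
  add_mem' hx hy := by simpa using N.add_mem hx hy
  zero_mem' := N.zero_mem
  smul_mem' r _ hy := by simpa using N.smul_mem (0, r) hy

@[simp] lemma mem_fstProd {N : Submodule (R₁ × R₂) (M₁ × M₂)} {x : M₁} :
    x ∈ fstProd N ↔ (x, 0) ∈ N := Iff.rfl

@[simp] lemma mem_sndProd {N : Submodule (R₁ × R₂) (M₁ × M₂)} {y : M₂} :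
    y ∈ sndProd N ↔ (0, y) ∈ N := Iff.rfl

lemma prodProd_fstProd_sndProd (N : Submodule (R₁ × R₂) (M₁ × M₂)) :
    prodProd (fstProd N) (sndProd N) = N := by
  ext ⟨x, y⟩
  refine ⟨fun h => by simpa using N.add_mem h.1 h.2, fun h => ⟨?_, ?_⟩⟩
  · simpa using N.smul_mem (1, 0) h
  · simpa using N.smul_mem (0, 1) h

lemma prodProd_colon_top (P : Submodule R₁ M₁) (Q : Submodule R₂ M₂) :
    (prodProd P Q).colon ⊤ = (P.colon ⊤).prod (Q.colon ⊤) := by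
  ext r
  simp only [mem_colon, Ideal.mem_prod, Set.top_eq_univ, Set.mem_univ, true_implies]
  refine ⟨fun h => ⟨fun x => (h (x, 0)).1, fun y => (h (0, y)).2⟩,
    fun h x => ⟨h.1 x.1, h.2 x.2⟩⟩

lemma pointwise_smul_prodProd (s : R₁ × R₂) (P : Submodule R₁ M₁) (Q : Submodule R₂ M₂) :
    s • prodProd P Q = prodProd (s.1 • P) (s.2 • Q) := by
  ext x
  simp only [mem_smul_pointwise_iff_exists, mem_prodProd]
  constructor
  · rintro ⟨y, ⟨hy₁, hy₂⟩, rfl⟩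
    exact ⟨⟨y.1, hy₁, rfl⟩, ⟨y.2, hy₂, rfl⟩⟩
  · rintro ⟨⟨y₁, hy₁, hx₁⟩, ⟨y₂, hy₂, hx₂⟩⟩
    exact ⟨(y₁, y₂), ⟨hy₁, hy₂⟩, Prod.ext hx₁ hx₂⟩

end Submodule

namespace Ideal

open Submodule

lemma prod_smul_prodProd (I : Ideal R₁) (J : Ideal R₂) (P : Submodule R₁ M₁)
    (Q : Submodule R₂ M₂) : I.prod J • prodProd P Q = prodProd (I • P) (J • Q) := by
  refine le_antisymm (smul_le.mpr fun r hr x hx => ?_) ?_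
  · exact ⟨smul_mem_smul hr.1 hx.1, smul_mem_smul hr.2 hx.2⟩
  · conv_rhs => rw [← prodProd_fstProd_sndProd (I.prod J • prodProd P Q)]
    refine prodProd_le_prodProd_iff.mpr ⟨smul_le.mpr fun r hr x hx => ?_,
      smul_le.mpr fun r hr y hy => ?_⟩
    · simpa using smul_mem_smul (show (r, 0) ∈ I.prod J from ⟨hr, J.zero_mem⟩)
        (show ((x, 0) : M₁ × M₂) ∈ prodProd P Q from ⟨hx, Q.zero_mem⟩)
    · simpa using smul_mem_smul (show (0, r) ∈ I.prod J from ⟨I.zero_mem, hr⟩)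
        (show ((0, y) : M₁ × M₂) ∈ prodProd P Q from ⟨P.zero_mem, hy⟩)

lemma prod_pow_smul_prodProd (I : Ideal R₁) (J : Ideal R₂) (P : Submodule R₁ M₁)
    (Q : Submodule R₂ M₂) (n : ℕ) :
    I.prod J ^ n • prodProd P Q = prodProd (I ^ n • P) (J ^ n • Q) := by
  induction n with
  | zero => simp only [pow_zero, one_eq_top, top_smul]
  | succ n ih =>
    rw [pow_succ', pow_succ', pow_succ', Submodule.mul_smul, Submodule.mul_smul,
      Submodule.mul_smul, ih, prod_smul_prodProd]

end Ideal

lemma Submodule.sIdempotent_prodProd_iff {S₁ : Submonoid R₁} {S₂ : Submonoid R₂}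
    {P : Submodule R₁ M₁} {Q : Submodule R₂ M₂} :
    (prodProd P Q).SIdempotent (S₁.prod S₂) ↔ P.SIdempotent S₁ ∧ Q.SIdempotent S₂ := by
  simp only [SIdempotent, prodProd_colon_top, ← prodProd_top_top, Ideal.prod_pow_smul_prodProd,
    pointwise_smul_prodProd, prodProd_le_prodProd_iff]
  constructor
  · rintro ⟨s, ⟨hs₁, hs₂⟩, ⟨hP, hQ⟩, hP', hQ'⟩
    exact ⟨⟨s.1, hs₁, hP, hP'⟩, ⟨s.2, hs₂, hQ, hQ'⟩⟩
  · rintro ⟨⟨s₁, hs₁, hP, hP'⟩, ⟨s₂, hs₂, hQ, hQ'⟩⟩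
    exact ⟨(s₁, s₂), ⟨hs₁, hs₂⟩, ⟨hP, hQ⟩, hP', hQ'⟩

end ProdProd

/-- `M₁ × M₂` is a fully `S₁ × S₂`-idempotent `R₁ × R₂`-module iff `Mᵢ` is a fully
`Sᵢ`-idempotent `Rᵢ`-module for `i = 1, 2`. -/
theorem fullySIdempotent_prod
    {R₁ R₂ M₁ M₂ : Type*} [CommRing R₁] [CommRing R₂]
    [AddCommGroup M₁] [Module R₁ M₁] [AddCommGroup M₂] [Module R₂ M₂]
    (S₁ : Submonoid R₁) (S₂ : Submonoid R₂) :
    Module.FullySIdempotent (R₁ × R₂) (M₁ × M₂) (S₁.prod S₂) ↔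
      Module.FullySIdempotent R₁ M₁ S₁ ∧ Module.FullySIdempotent R₂ M₂ S₂ := by
  refine ⟨fun h => ⟨fun P => ?_, fun Q => ?_⟩, fun ⟨h₁, h₂⟩ N => ?_⟩
  · exact (Submodule.sIdempotent_prodProd_iff.mp (h (.prodProd P ⊤))).1
  · exact (Submodule.sIdempotent_prodProd_iff.mp (h (.prodProd ⊤ Q))).2
  · rw [← Submodule.prodProd_fstProd_sndProd N]
    exact Submodule.sIdempotent_prodProd_iff.mpr ⟨h₁ _, h₂ _⟩
end

section
/- Let n ∈ ℕ, let Rᵢ be commutative rings with identity, Mᵢ an Rᵢ-module and Sᵢ ⊆ Rᵢ a multiplicatively closed subset for i = 1, …, n. Set M = M₁ × ⋯ × Mₙ, R = R₁ × ⋯ × Rₙ, and S = S₁ × ⋯ × Sₙ. Then M is a fully S-idempotent R-module if and only if Mᵢ is a fully Sᵢ-idempotent Rᵢ-module for each i ∈ {1, …, n}. -/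
open Pointwise
section aux
variable {ι : Type*} [Fintype ι] [DecidableEq ι]
variable {R : ι → Type*} {M : ι → Type*}
  [∀ i, CommRing (R i)] [∀ i, AddCommGroup (M i)] [∀ i, Module (R i) (M i)]

/-- The product of a family of submodules, as a submodule over the product ring. -/
def piSub (p : ∀ i, Submodule (R i) (M i)) : Submodule (∀ i, R i) (∀ i, M i) where
  carrier := {x | ∀ i, x i ∈ p i}
  add_mem' hx hy i := (p i).add_mem (hx i) (hy i)
  zero_mem' i := (p i).zero_mem
  smul_mem' r {x} hx i := (p i).smul_mem (r i) (hx i)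

lemma mem_piSub {p : ∀ i, Submodule (R i) (M i)} {x : ∀ i, M i} :
    x ∈ piSub p ↔ ∀ i, x i ∈ p i := Iff.rfl

lemma single_mem_piSub {p : ∀ i, Submodule (R i) (M i)} {i : ι} {m : M i}
    (h : m ∈ p i) : Pi.single i m ∈ piSub p := by
  intro j
  by_cases hj : j = i
  · subst hj; simpa using h
  · simp [Pi.single_eq_of_ne hj]

lemma single_smul_single {i : ι} (r : R i) (m : M i) :
    (Pi.single i r : ∀ i, R i) • (Pi.single i m : ∀ i, M i) = Pi.single i (r • m) := by
  funext j
  by_cases hj : j = i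
  · subst hj; simp
  · simp [Pi.single_eq_of_ne hj]

lemma single_eq_single_one_smul {i : ι} (x : ∀ i, M i) :
    (Pi.single i (x i) : ∀ i, M i) = (Pi.single i (1 : R i) : ∀ i, R i) • x := by
  funext j
  by_cases hj : j = i
  · subst hj; simp
  · simp [Pi.single_eq_of_ne hj]

lemma piSub_mono {p q : ∀ i, Submodule (R i) (M i)} (h : ∀ i, p i ≤ q i) :
    piSub p ≤ piSub q := fun _ hx i => h i (hx i)

lemma le_of_piSub_le {p q : ∀ i, Submodule (R i) (M i)} (h : piSub p ≤ piSub q) (i : ι) :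
    p i ≤ q i := by
  intro m hm
  have := h (single_mem_piSub hm) i
  simpa using this

lemma piSub_top : piSub (fun i => (⊤ : Submodule (R i) (M i))) = ⊤ := by
  ext x; simp [mem_piSub]

lemma piSub_colon (p : ∀ i, Submodule (R i) (M i)) :
    (piSub p).colon ⊤ = piSub (fun i => (p i).colon ⊤) := by
  ext r
  simp only [Submodule.mem_colon, mem_piSub]
  constructor
  · intro h i m _
    have := h (Pi.single i m) trivial i
    simpa using this
  · intro h m _ i
    exact h i (m i) trivial

lemma piSub_smul (I : ∀ i, Ideal (R i)) (p : ∀ i, Submodule (R i) (M i)) :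
    piSub I • piSub p = piSub (fun i => I i • p i) := by
  apply le_antisymm
  · refine Submodule.smul_le.2 fun r hr m hm i => Submodule.smul_mem_smul (hr i) (hm i)
  · intro x hx
    rw [← Finset.univ_sum_single x]
    refine Submodule.sum_mem _ fun i _ => ?_
    have hxi : x i ∈ I i • p i := hx i
    refine Submodule.smul_induction_on hxi ?_ ?_
    · intro r hr m hm
      rw [← single_smul_single]
      exact Submodule.smul_mem_smul (single_mem_piSub hr) (single_mem_piSub hm)
    · intro m₁ m₂ h1 h2
      rw [Pi.single_add]
      exact Submodule.add_mem _ h1 h2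

lemma sq_eq_smul' {A : Type*} [CommRing A] (J : Ideal A) : J ^ 2 = J • J := by
  rw [pow_two]; rfl

lemma piSub_sq (I : ∀ i, Ideal (R i)) :
    (piSub I) ^ 2 = piSub (fun i => (I i) ^ 2) := by
  rw [sq_eq_smul', piSub_smul]
  congr 1
  funext i
  rw [sq_eq_smul']

lemma colon_sq_smul_top (p : ∀ i, Submodule (R i) (M i)) :
    ((piSub p).colon ⊤) ^ 2 • (⊤ : Submodule (∀ i, R i) (∀ i, M i)) =
      piSub (fun i => ((p i).colon ⊤) ^ 2 • (⊤ : Submodule (R i) (M i))) := by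
  rw [piSub_colon, piSub_sq, ← piSub_top (R := R) (M := M), piSub_smul]

/-- Every submodule of the product is a product of componentwise submodules. -/
def compSub (N : Submodule (∀ i, R i) (∀ i, M i)) (i : ι) : Submodule (R i) (M i) where
  carrier := {m | (Pi.single i m : ∀ i, M i) ∈ N}
  add_mem' {a b} ha hb := by
    have : (Pi.single i (a + b) : ∀ i, M i) = Pi.single i a + Pi.single i b := Pi.single_add i a b
    simpa [Set.mem_setOf_eq, this] using N.add_mem ha hb
  zero_mem' := by simp [Set.mem_setOf_eq]
  smul_mem' r {m} hm := by
    have : (Pi.single i (r • m) : ∀ i, M i) = (Pi.single i r : ∀ i, R i) • Pi.single i m :=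
      (single_smul_single r m).symm
    simpa [Set.mem_setOf_eq, this] using N.smul_mem (Pi.single i r) hm

lemma piSub_compSub (N : Submodule (∀ i, R i) (∀ i, M i)) : piSub (compSub N) = N := by
  ext x
  constructor
  · intro hx
    rw [← Finset.univ_sum_single x]
    exact Submodule.sum_mem _ fun i _ => hx i
  · intro hx i
    show (Pi.single i (x i) : ∀ i, M i) ∈ N
    rw [single_eq_single_one_smul (R := R)]
    exact N.smul_mem _ hx

end aux

/-- `M₁ × ⋯ × Mₙ` is a fully `S₁ × ⋯ × Sₙ`-idempotent `R₁ × ⋯ × Rₙ`-module iff each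
`Mᵢ` is a fully `Sᵢ`-idempotent `Rᵢ`-module. -/
theorem fullySIdempotent_pi
    {n : ℕ} {R : Fin n → Type*} {M : Fin n → Type*}
    [∀ i, CommRing (R i)] [∀ i, AddCommGroup (M i)] [∀ i, Module (R i) (M i)]
    (S : ∀ i, Submonoid (R i)) :
    Module.FullySIdempotent (∀ i, R i) (∀ i, M i) (Submonoid.pi Set.univ S) ↔
      ∀ i, Module.FullySIdempotent (R i) (M i) (S i) := by
  constructor
  · intro h i Ni
    obtain ⟨s, hs, h1, h2⟩ := h (piSub (Function.update (fun j => ⊤) i Ni))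
    rw [colon_sq_smul_top] at h1 h2
    refine ⟨s i, hs i (Set.mem_univ i), ?_, ?_⟩
    · intro y hy
      obtain ⟨m, hm, rfl⟩ := Set.mem_smul_set.1 hy
      have hx : (Pi.single i m : ∀ j, M j) ∈ piSub (Function.update (fun j => ⊤) i Ni) :=
        single_mem_piSub (by simpa using hm)
      have := h1 (Submodule.smul_mem_pointwise_smul _ s _ hx) i
      simpa using this
    · intro m hm
      have := h2 (single_mem_piSub (i := i) (by simpa using hm)) i
      simpa using this
  · intro h N
    choose s hs h1 h2 using fun i => h i (compSub N i)
    refine ⟨s, fun i _ => hs i, ?_, ?_⟩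
    · rw [← piSub_compSub N, colon_sq_smul_top]
      intro y hy
      obtain ⟨x, hx, rfl⟩ := Set.mem_smul_set.1 hy
      intro i
      exact h1 i (Submodule.smul_mem_pointwise_smul _ _ _ (hx i))
    · rw [← piSub_compSub N, colon_sq_smul_top]
      exact piSub_mono h2
end

section
/- Let R be a commutative ring with identity, M an R-module, N a submodule of M, and S a multiplicatively closed subset of R. Then the following are equivalent: (a) N is a fully S-idempotent R-module; (b) 0 ⋉ N is a fully (S ⋉ 0)-idempotent ideal of the idealization R ⋉ M; (c) 0 ⋉ N is a fully (S ⋉ M)-idempotent ideal of R ⋉ M. -/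
open Pointwise
section Idealization

variable (R M : Type*) [CommRing R] [AddCommGroup M] [Module R M]
  [Module Rᵐᵒᵖ M] [IsCentralScalar R M]

/-- For a submodule `N` of `M`, the homogeneous ideal `0 ⋉ N` of the idealization
`R ⋉ M`. -/
def Submodule.idealizationIdeal (N : Submodule R M) : Ideal (TrivSqZeroExt R M) where
  carrier := {z | z.fst = 0 ∧ z.snd ∈ N}
  zero_mem' := ⟨rfl, N.zero_mem⟩
  add_mem' := fun hx hy => ⟨by simp [hx.1, hy.1], N.add_mem hx.2 hy.2⟩
  smul_mem' := fun c x hx => by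
    refine ⟨?_, ?_⟩
    · show (c * x).fst = 0
      rw [TrivSqZeroExt.fst_mul, hx.1, mul_zero]
    · show (c * x).snd ∈ N
      rw [TrivSqZeroExt.snd_mul, hx.1]
      simpa using N.smul_mem c.fst hx.2

/-- The multiplicatively closed subset `S ⋉ 0 = {(s, 0) : s ∈ S}` of `R ⋉ M`. -/
def Submonoid.idealizationZero (S : Submonoid R) : Submonoid (TrivSqZeroExt R M) where
  carrier := {z | z.fst ∈ S ∧ z.snd = 0}
  one_mem' := ⟨S.one_mem, TrivSqZeroExt.snd_one⟩
  mul_mem' := fun ha hb =>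
    ⟨by rw [TrivSqZeroExt.fst_mul]; exact S.mul_mem ha.1 hb.1,
      by rw [TrivSqZeroExt.snd_mul, ha.2, hb.2]; simp⟩

/-- The multiplicatively closed subset `S ⋉ M = {(s, m) : s ∈ S, m ∈ M}` of `R ⋉ M`. -/
def Submonoid.idealizationFull (S : Submonoid R) : Submonoid (TrivSqZeroExt R M) where
  carrier := {z | z.fst ∈ S}
  one_mem' := by simpa using S.one_mem
  mul_mem' := fun ha hb => by
    rw [Set.mem_setOf_eq, TrivSqZeroExt.fst_mul]; exact S.mul_mem ha hb

end Idealization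

namespace IdemAux

open TrivSqZeroExt

variable {R M : Type*} [CommRing R] [AddCommGroup M] [Module R M]
  [Module Rᵐᵒᵖ M] [IsCentralScalar R M] {N : Submodule R M}

lemma fst_coe (x : ↥(N.idealizationIdeal R M)) : (x : TrivSqZeroExt R M).fst = 0 := x.2.1

/-- Embedding of `N` into `0 ⋉ N`. -/
def embJ (n : ↥N) : ↥(N.idealizationIdeal R M) :=
  ⟨inr (n : M), ⟨fst_inr _ _, by rw [snd_inr]; exact n.2⟩⟩

/-- Projection of `0 ⋉ N` onto `N`. -/
def sndN (x : ↥(N.idealizationIdeal R M)) : ↥N := ⟨(x : TrivSqZeroExt R M).snd, x.2.2⟩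

lemma embJ_sndN (x : ↥(N.idealizationIdeal R M)) : embJ (sndN x) = x := by
  refine Subtype.ext ?_
  show (inr ((x : TrivSqZeroExt R M).snd) : TrivSqZeroExt R M) = (x : TrivSqZeroExt R M)
  exact TrivSqZeroExt.ext (by rw [fst_inr, fst_coe]) (snd_inr (R := R) _)

lemma sndN_embJ (n : ↥N) : sndN (embJ n) = n := by
  refine Subtype.ext ?_
  show (inr ((n : M)) : TrivSqZeroExt R M).snd = (n : M)
  exact snd_inr (R := R) _

lemma coe_smul_J (a : TrivSqZeroExt R M) (x : ↥(N.idealizationIdeal R M)) :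
    ((a • x : ↥(N.idealizationIdeal R M)) : TrivSqZeroExt R M) = a * (x : TrivSqZeroExt R M) :=
  rfl

lemma sndN_smul (a : TrivSqZeroExt R M) (x : ↥(N.idealizationIdeal R M)) :
    sndN (a • x) = a.fst • sndN x := by
  refine Subtype.ext ?_
  show ((a • x : ↥(N.idealizationIdeal R M)) : TrivSqZeroExt R M).snd
      = a.fst • (x : TrivSqZeroExt R M).snd
  rw [coe_smul_J, snd_mul, fst_coe]
  simp

lemma sndN_add (x y : ↥(N.idealizationIdeal R M)) : sndN (x + y) = sndN x + sndN y := rfl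

lemma sndN_zero : sndN (0 : ↥(N.idealizationIdeal R M)) = 0 := rfl

lemma smul_embJ (a : TrivSqZeroExt R M) (n : ↥N) : a • embJ n = embJ (a.fst • n) := by
  have : sndN (a • embJ n) = a.fst • n := by rw [sndN_smul, sndN_embJ]
  calc a • embJ n = embJ (sndN (a • embJ n)) := (embJ_sndN _).symm
    _ = embJ (a.fst • n) := by rw [this]

lemma embJ_add (m n : ↥N) : embJ (m + n) = embJ m + embJ n :=
  Subtype.ext (TrivSqZeroExt.ext (by simp [embJ]) (by simp [embJ]))

lemma embJ_zero : embJ (0 : ↥N) = 0 :=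
  Subtype.ext (TrivSqZeroExt.ext (by simp [embJ]) (by simp [embJ]))

/-- The `R ⋉ M`-submodule of `0 ⋉ N` corresponding to a submodule `P` of `N`. -/
def toJ (P : Submodule R ↥N) : Submodule (TrivSqZeroExt R M) ↥(N.idealizationIdeal R M) where
  carrier := {x | sndN x ∈ P}
  zero_mem' := by simp [Set.mem_setOf_eq, sndN_zero]
  add_mem' := fun {x y} hx hy => by
    simp only [Set.mem_setOf_eq, sndN_add] at *
    exact P.add_mem hx hy
  smul_mem' := fun a x hx => by
    simp only [Set.mem_setOf_eq, sndN_smul] at *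
    exact P.smul_mem _ hx

lemma mem_toJ {P : Submodule R ↥N} {x : ↥(N.idealizationIdeal R M)} :
    x ∈ toJ P ↔ sndN x ∈ P := Iff.rfl

lemma embJ_mem_toJ {P : Submodule R ↥N} {n : ↥N} : embJ n ∈ toJ P ↔ n ∈ P := by
  rw [mem_toJ, sndN_embJ]

/-- The submodule of `N` corresponding to an `R ⋉ M`-submodule of `0 ⋉ N`. -/
def toN (Q : Submodule (TrivSqZeroExt R M) ↥(N.idealizationIdeal R M)) : Submodule R ↥N where
  carrier := {n | embJ n ∈ Q}
  zero_mem' := by simp [Set.mem_setOf_eq, embJ_zero]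
  add_mem' := fun {m n} hm hn => by
    simp only [Set.mem_setOf_eq, embJ_add] at *
    exact Q.add_mem hm hn
  smul_mem' := fun r n hn => by
    simp only [Set.mem_setOf_eq] at *
    have : embJ (r • n) = (inl r : TrivSqZeroExt R M) • embJ n := by
      rw [smul_embJ, fst_inl]
    rw [this]
    exact Q.smul_mem _ hn

lemma toJ_toN (Q : Submodule (TrivSqZeroExt R M) ↥(N.idealizationIdeal R M)) :
    toJ (toN Q) = Q := by
  ext x
  rw [mem_toJ]
  show embJ (sndN x) ∈ Q ↔ x ∈ Q
  rw [embJ_sndN]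

lemma toJ_le_toJ {P P' : Submodule R ↥N} : toJ P ≤ toJ P' ↔ P ≤ P' := by
  constructor
  · intro h n hn
    have := h (embJ_mem_toJ.2 hn)
    rwa [embJ_mem_toJ] at this
  · intro h x hx
    exact h hx

lemma smul_toJ (a : TrivSqZeroExt R M) (P : Submodule R ↥N) :
    a • toJ P = toJ (a.fst • P) := by
  ext x
  have h1 : x ∈ a • toJ P ↔ ∃ y ∈ toJ P, a • y = x := by
    constructor
    · intro hx
      have : x ∈ (↑(a • toJ P) : Set _) := hx
      rw [Submodule.coe_pointwise_smul] at this
      obtain ⟨y, hy, hxy⟩ := this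
      exact ⟨y, hy, hxy⟩
    · rintro ⟨y, hy, rfl⟩
      exact Submodule.smul_mem_pointwise_smul y a (toJ P) hy
  have h2 : sndN x ∈ a.fst • P ↔ ∃ p ∈ P, a.fst • p = sndN x := by
    constructor
    · intro hx
      have : sndN x ∈ (↑(a.fst • P) : Set _) := hx
      rw [Submodule.coe_pointwise_smul] at this
      obtain ⟨p, hp, hps⟩ := this
      exact ⟨p, hp, hps⟩
    · rintro ⟨p, hp, hps⟩
      rw [← hps]
      exact Submodule.smul_mem_pointwise_smul p a.fst P hp
  rw [mem_toJ, h1, h2]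
  constructor
  · rintro ⟨y, hy, rfl⟩
    exact ⟨sndN y, hy, (sndN_smul a y).symm⟩
  · rintro ⟨p, hp, hps⟩
    refine ⟨embJ p, embJ_mem_toJ.2 hp, ?_⟩
    rw [smul_embJ, hps, embJ_sndN]

lemma fstHom_surjective :
    Function.Surjective (TrivSqZeroExt.fstHom R R M) :=
  fun r => ⟨inl r, fst_inl M r⟩

lemma colon_toJ (P : Submodule R ↥N) :
    (toJ P).colon ⊤ = Ideal.comap (TrivSqZeroExt.fstHom R R M) (P.colon ⊤) := by
  ext a
  rw [Submodule.mem_colon, Ideal.mem_comap, Submodule.mem_colon]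
  constructor
  · intro h n _
    have := h (embJ n) trivial
    rw [mem_toJ, sndN_smul, sndN_embJ] at this
    exact this
  · intro h x _
    rw [mem_toJ, sndN_smul]
    exact h (sndN x) trivial

lemma smul_top_J (K : Ideal (TrivSqZeroExt R M)) :
    K • (⊤ : Submodule (TrivSqZeroExt R M) ↥(N.idealizationIdeal R M)) =
      toJ (Ideal.map (TrivSqZeroExt.fstHom R R M) K • (⊤ : Submodule R ↥N)) := by
  refine le_antisymm ?_ ?_
  · refine Submodule.smul_le.2 fun a ha x _ => ?_
    rw [mem_toJ, sndN_smul]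
    exact Submodule.smul_mem_smul (Ideal.mem_map_of_mem _ ha) trivial
  · intro x hx
    rw [mem_toJ] at hx
    have key : ∀ y ∈ (Ideal.map (TrivSqZeroExt.fstHom R R M) K • (⊤ : Submodule R ↥N)),
        embJ y ∈ K • (⊤ : Submodule (TrivSqZeroExt R M) ↥(N.idealizationIdeal R M)) := by
      intro y hy
      refine Submodule.smul_induction_on hy ?_ ?_
      · intro r hr n _
        obtain ⟨a, ha, hfa⟩ :=
          (Ideal.mem_map_iff_of_surjective _ fstHom_surjective).1 hr
        have : r • n = a.fst • n := by rw [← hfa]; rfl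
        rw [this, ← smul_embJ]
        exact Submodule.smul_mem_smul ha trivial
      · intro y z hy hz
        rw [embJ_add]
        exact Submodule.add_mem _ hy hz
    have := key _ hx
    rwa [embJ_sndN] at this

lemma colon_sq_smul (P : Submodule R ↥N) :
    ((toJ P).colon ⊤) ^ 2 • (⊤ : Submodule (TrivSqZeroExt R M) ↥(N.idealizationIdeal R M)) =
      toJ ((P.colon ⊤) ^ 2 • (⊤ : Submodule R ↥N)) := by
  rw [smul_top_J, colon_toJ, Ideal.map_pow,
    Ideal.map_comap_of_surjective _ fstHom_surjective]

lemma sidem_iff (S : Submonoid R) (T : Submonoid (TrivSqZeroExt R M))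
    (hT : ∀ a : TrivSqZeroExt R M, a ∈ T → a.fst ∈ S)
    (hS : ∀ s ∈ S, (inl s : TrivSqZeroExt R M) ∈ T) (P : Submodule R ↥N) :
    P.SIdempotent S ↔ (toJ P).SIdempotent T := by
  constructor
  · rintro ⟨s, hs, h1, h2⟩
    refine ⟨inl s, hS s hs, ?_, ?_⟩
    · rw [smul_toJ, colon_sq_smul, fst_inl]
      exact toJ_le_toJ.2 h1
    · rw [colon_sq_smul]
      exact toJ_le_toJ.2 h2
  · rintro ⟨a, ha, h1, h2⟩
    refine ⟨a.fst, hT a ha, ?_, ?_⟩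
    · rw [smul_toJ, colon_sq_smul] at h1
      exact toJ_le_toJ.1 h1
    · rw [colon_sq_smul] at h2
      exact toJ_le_toJ.1 h2

lemma fully_iff (S : Submonoid R) (T : Submonoid (TrivSqZeroExt R M))
    (hT : ∀ a : TrivSqZeroExt R M, a ∈ T → a.fst ∈ S)
    (hS : ∀ s ∈ S, (inl s : TrivSqZeroExt R M) ∈ T) :
    Module.FullySIdempotent R N S ↔
      Module.FullySIdempotent (TrivSqZeroExt R M) (N.idealizationIdeal R M) T := by
  constructor
  · intro h Q
    have := (sidem_iff S T hT hS (toN Q)).1 (h (toN Q))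
    rwa [toJ_toN] at this
  · intro h P
    exact (sidem_iff S T hT hS P).2 (h (toJ P))

end IdemAux

/-- For a submodule `N` of `M`, the following are equivalent: (a) `N` is a fully
`S`-idempotent `R`-module; (b) `0 ⋉ N` is a fully `(S ⋉ 0)`-idempotent ideal of
`R ⋉ M`; (c) `0 ⋉ N` is a fully `(S ⋉ M)`-idempotent ideal of `R ⋉ M`. -/
theorem fullySIdempotent_idealization
    {R M : Type*} [CommRing R] [AddCommGroup M] [Module R M]
    [Module Rᵐᵒᵖ M] [IsCentralScalar R M]
    (S : Submonoid R) (N : Submodule R M) :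
    (Module.FullySIdempotent R N S ↔
      Module.FullySIdempotent (TrivSqZeroExt R M) (N.idealizationIdeal R M)
        (S.idealizationZero R M)) ∧
    (Module.FullySIdempotent R N S ↔
      Module.FullySIdempotent (TrivSqZeroExt R M) (N.idealizationIdeal R M)
        (S.idealizationFull R M)) := by
  constructor
  · exact IdemAux.fully_iff S (S.idealizationZero R M)
      (fun a ha => ha.1)
      (fun s hs => ⟨by rwa [TrivSqZeroExt.fst_inl], TrivSqZeroExt.snd_inl M s⟩)
  · exact IdemAux.fully_iff S (S.idealizationFull R M)
      (fun a ha => ha)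
      (fun s hs => show (TrivSqZeroExt.inl s : TrivSqZeroExt R M).fst ∈ S by
        rwa [TrivSqZeroExt.fst_inl])
end

section
/- Let R be a commutative ring with identity, S a multiplicatively closed subset of R, M and M' R-modules, and f : M → M' a surjective R-module homomorphism. If M is a fully S-idempotent R-module, then M' is a fully S-idempotent R-module. Conversely, if M' is a fully S-idempotent R-module and t·ker(f) = 0 for some t ∈ S, then M is a fully S-idempotent R-module. -/
open Pointwise
private lemma colon_sq_smul_le {R M : Type*} [CommRing R] [AddCommGroup M] [Module R M]
    (N : Submodule R M) : (N.colon ⊤) ^ 2 • (⊤ : Submodule R M) ≤ N := by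
  calc (N.colon ⊤) ^ 2 • (⊤ : Submodule R M)
      ≤ (N.colon ⊤) • (⊤ : Submodule R M) :=
        Submodule.smul_mono_left (Ideal.pow_le_self two_ne_zero)
    _ ≤ N := Submodule.smul_le.2 fun r hr n _ => Submodule.mem_colon.1 hr n trivial

/-- Fully `S`-idempotent modules are preserved by surjective homomorphisms; conversely,
if `M'` is fully `S`-idempotent and `t • ker f = 0` for some `t ∈ S`, then `M` is fully
`S`-idempotent. -/
theorem fullySIdempotent_of_surjective
    {R M M' : Type*} [CommRing R] [AddCommGroup M] [Module R M]
    [AddCommGroup M'] [Module R M'] (S : Submonoid R)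
    (f : M →ₗ[R] M') (hf : Function.Surjective f) :
    (Module.FullySIdempotent R M S → Module.FullySIdempotent R M' S) ∧
      (Module.FullySIdempotent R M' S →
        (∃ t ∈ S, ∀ x ∈ LinearMap.ker f, t • x = 0) →
        Module.FullySIdempotent R M S) := by
  have htop : (⊤ : Submodule R M).map f = ⊤ := by
    rw [Submodule.map_top, LinearMap.range_eq_top.2 hf]
  constructor
  · -- forward direction
    intro hM N'
    set N := N'.comap f with hN
    have hmap : N.map f = N' := Submodule.map_comap_eq_of_surjective hf N'
    have hc : N.colon ⊤ = N'.colon ⊤ := by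
      ext r
      simp only [Submodule.mem_colon, Submodule.mem_top, forall_true_left]
      constructor
      · intro h m'
        obtain ⟨m, rfl⟩ := hf m'
        have := h m
        rw [Submodule.mem_comap] at this
        simpa [map_smul] using this
      · intro h m
        rw [Submodule.mem_comap, map_smul]
        exact h (f m)
    obtain ⟨s, hs, h1, _⟩ := hM N
    refine ⟨s, hs, ?_, colon_sq_smul_le N'⟩
    calc s • N' = s • N.map f := by rw [hmap]
      _ = (s • N).map f := (Submodule.map_pointwise_smul s N f).symm
      _ ≤ ((N.colon ⊤) ^ 2 • (⊤ : Submodule R M)).map f := Submodule.map_mono h1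
      _ = (N.colon ⊤) ^ 2 • ((⊤ : Submodule R M).map f) := Submodule.map_smul'' _ _ f
      _ = (N'.colon ⊤) ^ 2 • (⊤ : Submodule R M') := by rw [htop, hc]
  · -- converse direction
    intro hM' ⟨t, ht, htk⟩ N
    set N' := N.map f with hN'
    obtain ⟨s, hs, h1, _⟩ := hM' N'
    -- t • (N' : M') ⊆ (N : M)
    have key : ∀ r ∈ N'.colon ⊤, t * r ∈ N.colon ⊤ := by
      intro r hr
      rw [Submodule.mem_colon] at hr ⊢
      intro m _
      have hfm : f (r • m) ∈ N' := by rw [map_smul]; exact hr (f m) trivial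
      obtain ⟨n, hn, hfn⟩ := hfm
      have hker : r • m - n ∈ LinearMap.ker f := by
        rw [LinearMap.mem_ker, map_sub, hfn, sub_self]
      have := htk _ hker
      rw [smul_sub, sub_eq_zero] at this
      rw [mul_smul, this]
      exact N.smul_mem t hn
    have key2 : ∀ z ∈ (N'.colon ⊤) ^ 2 • (⊤ : Submodule R M),
        (t * t) • z ∈ (N.colon ⊤) ^ 2 • (⊤ : Submodule R M) := by
      intro z hz
      refine Submodule.smul_induction_on hz ?_ ?_
      · intro r hr m _
        rw [smul_smul]
        refine Submodule.smul_mem_smul ?_ trivial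
        rw [sq] at hr ⊢
        refine Submodule.mul_induction_on hr ?_ ?_
        · intro a ha b hb
          have : t * t * (a * b) = (t * a) * (t * b) := by ring
          rw [this]
          exact Ideal.mul_mem_mul (key a ha) (key b hb)
        · intro x y hx hy
          rw [mul_add]
          exact Submodule.add_mem _ hx hy
      · intro x y hx hy
        rw [smul_add]
        exact Submodule.add_mem _ hx hy
    refine ⟨s * (t * (t * t)), S.mul_mem hs (S.mul_mem ht (S.mul_mem ht ht)),
      ?_, colon_sq_smul_le N⟩
    intro y hy
    rw [← SetLike.mem_coe, Submodule.coe_pointwise_smul] at hy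
    obtain ⟨x, hx, rfl⟩ := hy
    -- s • f x ∈ (N'.colon ⊤)^2 • ⊤
    have hsfx : s • f x ∈ (N'.colon ⊤) ^ 2 • (⊤ : Submodule R M') :=
      h1 (Submodule.smul_mem_pointwise_smul _ s N' (Submodule.mem_map_of_mem hx))
    have himg : (N'.colon ⊤) ^ 2 • (⊤ : Submodule R M') =
        ((N'.colon ⊤) ^ 2 • (⊤ : Submodule R M)).map f := by
      rw [Submodule.map_smul'' _ _ f, htop]
    rw [himg] at hsfx
    obtain ⟨z, hz, hfz⟩ := hsfx
    have hker : s • x - z ∈ LinearMap.ker f := by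
      rw [LinearMap.mem_ker, map_sub, map_smul, hfz, sub_self]
    have hts : t • (s • x) = t • z := by
      have := htk _ hker
      rwa [smul_sub, sub_eq_zero] at this
    show (s * (t * (t * t))) • x ∈ (N.colon ⊤) ^ 2 • (⊤ : Submodule R M)
    have heq : (s * (t * (t * t))) • x = t • ((t * t) • z) := by
      calc (s * (t * (t * t))) • x = (t * t) • (t • (s • x)) := by
            rw [smul_smul, smul_smul]; congr 1; ring
        _ = (t * t) • (t • z) := by rw [hts]
        _ = t • ((t * t) • z) := by rw [smul_smul, smul_smul]; congr 1; ring
    rw [heq]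
    exact Submodule.smul_mem _ t (key2 z hz)
end

section
/- Let R be a commutative ring with identity, S a multiplicatively closed subset of R, M an R-module, and N a submodule of M. If M is a fully S-idempotent R-module, then M/N is a fully S-idempotent R-module. Conversely, if M/N is a fully S-idempotent R-module and there exists t ∈ S with tN = 0, then M is a fully S-idempotent R-module. -/
/-!
Colon ideals do not change when a submodule of `M'` is pulled back along a surjection
`f : M → M'`, so the witness `s` for `f⁻¹(K)` also works for `K`. Conversely, if `t` kills
`ker f`, then `t • f⁻¹(f(K)) ⊆ t • K`; hence `t • (f(K) :_R M') ⊆ (K :_R M)`, and the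
witness `s` for `f(K)` yields the witness `t²s` for `K`.
-/

open Pointwise
namespace Submodule

section CommSemiring

variable {R M : Type*} [CommSemiring R] [AddCommMonoid M] [Module R M]

theorem colon_smul_top_le (P : Submodule R M) : P.colon ⊤ • (⊤ : Submodule R M) ≤ P :=
  smul_le.2 fun _ hr m _ => mem_colon.1 hr m trivial

theorem colon_sq_smul_top_le (P : Submodule R M) :
    (P.colon ⊤) ^ 2 • (⊤ : Submodule R M) ≤ P :=
  (smul_mono_left (Ideal.pow_le_self two_ne_zero)).trans P.colon_smul_top_le

variable {M' : Type*} [AddCommMonoid M'] [Module R M'] {f : M →ₗ[R] M'}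

theorem colon_top_comap_of_surjective (hf : Function.Surjective f) (K : Submodule R M') :
    (K.comap f).colon ⊤ = K.colon ⊤ := by
  ext r
  simp only [mem_colon, Set.top_eq_univ, Set.mem_univ, true_implies, mem_comap, map_smul]
  exact (hf.forall (p := fun y => r • y ∈ K)).symm

theorem map_smul_top_of_surjective (hf : Function.Surjective f) (I : Ideal R) :
    (I • (⊤ : Submodule R M)).map f = I • ⊤ := by
  rw [map_smul'', map_top, LinearMap.range_eq_top.2 hf]

end CommSemiring

variable {R M M' : Type*} [CommRing R] [AddCommGroup M] [Module R M] [AddCommGroup M'] [Module R M']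
  {S : Submonoid R} {f : M →ₗ[R] M'}

theorem SIdempotent.of_comap (hf : Function.Surjective f) {K : Submodule R M'}
    (hK : (K.comap f).SIdempotent S) : K.SIdempotent S := by
  obtain ⟨s, hs, hsK, -⟩ := hK
  refine ⟨s, hs, ?_, K.colon_sq_smul_top_le⟩
  calc s • K = (s • K.comap f).map f := by
        rw [map_pointwise_smul, map_comap_eq_of_surjective hf]
    _ ≤ (((K.comap f).colon ⊤) ^ 2 • ⊤ : Submodule R M).map f := map_mono hsK
    _ = (K.colon ⊤) ^ 2 • ⊤ := by
      rw [colon_top_comap_of_surjective hf, map_smul_top_of_surjective hf]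

theorem smul_comap_map_le_smul {t : R} (ht : ∀ x ∈ LinearMap.ker f, t • x = 0)
    (P : Submodule R M) : t • (P.map f).comap f ≤ t • P := by
  have hker : t • LinearMap.ker f = (⊥ : Submodule R M) := by
    rw [Submodule.eq_bot_iff]
    rintro _ ⟨x, hx, rfl⟩
    exact (mem_bot R).2 (ht x hx)
  rw [comap_map_eq, smul_sup', hker, sup_bot_eq]

theorem span_singleton_mul_colon_map_le {t : R} (ht : ∀ x ∈ LinearMap.ker f, t • x = 0)
    (K : Submodule R M) : Ideal.span {t} * (K.map f).colon ⊤ ≤ K.colon ⊤ := by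
  refine Ideal.span_singleton_mul_le_iff.2 fun r hr => mem_colon.2 fun m _ => ?_
  have hrm : r • m ∈ (K.map f).comap f := by
    simpa only [mem_comap, map_smul] using mem_colon.1 hr (f m) trivial
  rw [mul_smul]
  exact smul_le_self_of_tower t K (smul_comap_map_le_smul ht K (smul_mem_pointwise_smul _ t _ hrm))

theorem SIdempotent.of_map (hf : Function.Surjective f) {t : R} (htS : t ∈ S)
    (ht : ∀ x ∈ LinearMap.ker f, t • x = 0) {K : Submodule R M}
    (hK : (K.map f).SIdempotent S) : K.SIdempotent S := by
  obtain ⟨s, hs, hsK, -⟩ := hK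
  set I := (K.map f).colon ⊤
  have hI : Ideal.span {t} * (Ideal.span {t} * I ^ 2) ≤ (K.colon ⊤) ^ 2 := by
    rw [← mul_assoc, ← pow_two, ← mul_pow]
    exact pow_le_pow_left' (span_singleton_mul_colon_map_le ht K) 2
  refine ⟨t * t * s, S.mul_mem (S.mul_mem htS htS) hs, ?_, K.colon_sq_smul_top_le⟩
  have hsK_comap : s • K ≤ ((I ^ 2 • ⊤ : Submodule R M).map f).comap f := by
    rw [map_smul_top_of_surjective hf, ← map_le_iff_le_comap, map_pointwise_smul]
    exact hsK
  calc (t * t * s) • K = t • t • s • K := by rw [mul_smul, mul_smul]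
    _ ≤ t • t • (I ^ 2 • ⊤ : Submodule R M) :=
      smul_le_smul_left t ((smul_le_smul_left t hsK_comap).trans (smul_comap_map_le_smul ht _))
    _ = (Ideal.span {t} * (Ideal.span {t} * I ^ 2)) • ⊤ := by
      rw [Submodule.mul_smul, Submodule.mul_smul, ideal_span_singleton_smul,
        ideal_span_singleton_smul]
    _ ≤ (K.colon ⊤) ^ 2 • ⊤ := smul_mono_left hI

end Submodule

namespace Module.FullySIdempotent

variable {R M M' : Type*} [CommRing R] [AddCommGroup M] [Module R M] [AddCommGroup M'] [Module R M']
  {S : Submonoid R} {f : M →ₗ[R] M'}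

theorem of_surjective (hf : Function.Surjective f) (hM : FullySIdempotent R M S) :
    FullySIdempotent R M' S :=
  fun K => (hM (K.comap f)).of_comap hf

theorem of_surjective_of_smul_ker (hf : Function.Surjective f) {t : R} (htS : t ∈ S)
    (ht : ∀ x ∈ LinearMap.ker f, t • x = 0) (hM' : FullySIdempotent R M' S) :
    FullySIdempotent R M S :=
  fun K => (hM' (K.map f)).of_map hf htS ht

end Module.FullySIdempotent

/-- If `M` is fully `S`-idempotent then so is `M/N`; conversely, if `M/N` is fully
`S`-idempotent and `t • N = 0` for some `t ∈ S`, then `M` is fully `S`-idempotent. -/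
theorem fullySIdempotent_quotient
    {R M : Type*} [CommRing R] [AddCommGroup M] [Module R M] (S : Submonoid R)
    (N : Submodule R M) :
    (Module.FullySIdempotent R M S → Module.FullySIdempotent R (M ⧸ N) S) ∧
      (Module.FullySIdempotent R (M ⧸ N) S →
        (∃ t ∈ S, ∀ x ∈ N, t • x = 0) →
        Module.FullySIdempotent R M S) := by
  refine ⟨.of_surjective N.mkQ_surjective, fun hQ ⟨t, htS, ht⟩ => ?_⟩
  exact hQ.of_surjective_of_smul_ker N.mkQ_surjective htS (by rwa [N.ker_mkQ])
end

section
/- Let R be a commutative ring with identity, S and T multiplicatively closed subsets of R, and set S̃ = {s/1 ∈ T⁻¹R : s ∈ S}, a multiplicatively closed subset of T⁻¹R. If M is a fully S-idempotent R-module, then T⁻¹M is a fully S̃-idempotent T⁻¹R-module. In particular, S⁻¹M is a fully idempotent S⁻¹R-module. -/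
open Pointwise
-- trivial half: (N : M)² M ≤ N always
lemma aux_colon_sq_smul_le {A P : Type*} [CommRing A] [AddCommGroup P] [Module A P]
    (N : Submodule A P) : (N.colon ⊤) ^ 2 • (⊤ : Submodule A P) ≤ N := by
  have h1 : N.colon ⊤ • (⊤ : Submodule A P) ≤ N :=
    Submodule.smul_le.mpr fun r hr m _ => Submodule.mem_colon.mp hr m trivial
  calc (N.colon ⊤) ^ 2 • (⊤ : Submodule A P)
      = N.colon ⊤ • (N.colon ⊤ • (⊤ : Submodule A P)) := by rw [pow_two, mul_smul]
    _ ≤ N.colon ⊤ • (⊤ : Submodule A P) := smul_mono_right _ le_top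
    _ ≤ N := h1

-- main key lemma
lemma aux_key {R M : Type*} [CommRing R] [AddCommGroup M] [Module R M]
    (S T : Submonoid R) (h : Module.FullySIdempotent R M S)
    (N' : Submodule (Localization T) (LocalizedModule T M)) :
    ∃ s ∈ S, ∀ x ∈ N', (algebraMap R (Localization T) s) • x ∈
      (N'.colon ⊤) ^ 2 • (⊤ : Submodule (Localization T) (LocalizedModule T M)) := by
  set N : Submodule R M :=
    (N'.restrictScalars R).comap (LocalizedModule.mkLinearMap T M) with hN
  obtain ⟨s, hsS, hs1, -⟩ := h N
  refine ⟨s, hsS, ?_⟩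
  set C : Ideal (Localization T) := N'.colon ⊤ with hC
  -- algebraMap maps N.colon ⊤ into C
  have hcolon : ∀ a ∈ N.colon (⊤ : Submodule R M), algebraMap R (Localization T) a ∈ C := by
    intro a ha
    rw [hC, Submodule.mem_colon]
    intro p _
    induction p using LocalizedModule.induction_on with
    | h m t =>
      have : (algebraMap R (Localization T) a) • LocalizedModule.mk m t
          = LocalizedModule.mk (a • m) t := by
        rw [← Localization.mk_one_eq_algebraMap, LocalizedModule.mk_smul_mk, one_mul]
      rw [this]
      have h1 : LocalizedModule.mk (a • m) (1 : T) ∈ N' := by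
        have := Submodule.mem_colon.mp ha m trivial
        exact this
      have : LocalizedModule.mk (a • m) t
          = Localization.mk 1 t • LocalizedModule.mk (a • m) (1 : T) := by
        rw [LocalizedModule.mk_smul_mk, one_smul, mul_one]
      rw [this]
      exact N'.smul_mem _ h1
  -- image of (N.colon ⊤)² • ⊤ under mk · 1 lands in C² • ⊤
  have himg : ∀ m ∈ (N.colon (⊤ : Submodule R M)) ^ 2 • (⊤ : Submodule R M),
      LocalizedModule.mk m (1 : T) ∈ C ^ 2 • (⊤ : Submodule (Localization T) (LocalizedModule T M)) := by
    intro m hm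
    refine Submodule.smul_induction_on hm (fun r hr n _ => ?_) (fun x y hx hy => ?_)
    ·
      have hrC : algebraMap R (Localization T) r ∈ C ^ 2 := by
        have : Ideal.map (algebraMap R (Localization T)) ((N.colon ⊤) ^ 2) ≤ C ^ 2 := by
          rw [Ideal.map_pow]
          exact Ideal.pow_right_mono (Ideal.map_le_iff_le_comap.mpr fun a ha => Ideal.mem_comap.mpr (hcolon a ha)) 2
        exact this (Ideal.mem_map_of_mem _ hr)
      have : LocalizedModule.mk (r • n) (1 : T)
          = algebraMap R (Localization T) r • LocalizedModule.mk n (1 : T) := by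
        rw [← Localization.mk_one_eq_algebraMap, LocalizedModule.mk_smul_mk, one_mul]
      rw [this]
      exact Submodule.smul_mem_smul hrC trivial
    · have hxy : LocalizedModule.mk (x + y) (1 : T)
          = LocalizedModule.mk x (1 : T) + LocalizedModule.mk y (1 : T) := by
        rw [LocalizedModule.mk_add_mk]; simp
      rw [hxy]
      exact Submodule.add_mem _ hx hy
  intro x hx
  induction x using LocalizedModule.induction_on with
  | h m t =>
    have hm1 : LocalizedModule.mk m (1 : T) ∈ N' := by
      have : (algebraMap R (Localization T) (t : R)) • LocalizedModule.mk m t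
          = LocalizedModule.mk m (1 : T) := by
        rw [← Localization.mk_one_eq_algebraMap, LocalizedModule.mk_smul_mk, one_mul]
        exact LocalizedModule.mk_eq.mpr ⟨1, by simp [mul_smul, Submonoid.smul_def]⟩
      exact this ▸ N'.smul_mem _ hx
    have hmN : m ∈ N := hm1
    have hsm : s • m ∈ (N.colon (⊤ : Submodule R M)) ^ 2 • (⊤ : Submodule R M) := by
      have : s • m ∈ s • N := Submodule.smul_mem_pointwise_smul m s N hmN
      exact hs1 this
    have := himg _ hsm
    have heq : (algebraMap R (Localization T) s) • LocalizedModule.mk m t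
        = Localization.mk 1 t • LocalizedModule.mk (s • m) (1 : T) := by
      rw [← Localization.mk_one_eq_algebraMap, LocalizedModule.mk_smul_mk,
        LocalizedModule.mk_smul_mk, one_mul, one_smul, mul_one]
    rw [heq]
    exact Submodule.smul_mem _ _ this

/-- If `M` is a fully `S`-idempotent `R`-module, then `T⁻¹M` is a fully `S̃`-idempotent
`T⁻¹R`-module, where `S̃ = {s/1 : s ∈ S}`; in particular `S⁻¹M` is a fully idempotent
`S⁻¹R`-module. -/
theorem fullySIdempotent_localized
    {R M : Type*} [CommRing R] [AddCommGroup M] [Module R M]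
    (S T : Submonoid R) (h : Module.FullySIdempotent R M S) :
    Module.FullySIdempotent (Localization T) (LocalizedModule T M)
        (S.map (algebraMap R (Localization T))) ∧
      Module.FullyIdempotent (Localization S) (LocalizedModule S M) := by
  constructor
  · intro N'
    obtain ⟨s, hsS, hs⟩ := aux_key S T h N'
    refine ⟨algebraMap R (Localization T) s, ⟨s, hsS, rfl⟩, ?_, aux_colon_sq_smul_le N'⟩
    intro y hy
    obtain ⟨x, hx, rfl⟩ := Set.mem_smul_set.mp hy
    exact hs x hx
  · intro N'
    refine le_antisymm ?_ (aux_colon_sq_smul_le N')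
    intro x hx
    obtain ⟨s, hsS, hs⟩ := aux_key S S h N'
    have hu : IsUnit (algebraMap R (Localization S) s) :=
      IsLocalization.map_units (Localization S) ⟨s, hsS⟩
    have := hs x hx
    have := Submodule.smul_mem _ ((hu.unit⁻¹ : (Localization S)ˣ) : Localization S) this
    rwa [smul_smul, IsUnit.val_inv_mul, one_smul] at this
end

section
/- Let R be a commutative ring with identity, S a multiplicatively closed subset of R, and M an S-multiplication R-module. If N is an S-copure submodule of M, then N is an S-idempotent submodule of M. -/
open Pointwise
/-- `M` is an `S`-multiplication module. -/
def Module.SMultiplication (R M : Type*) [CommRing R] [AddCommGroup M] [Module R M]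
    (S : Submonoid R) : Prop :=
  ∀ N : Submodule R M, ∃ s ∈ S, ∃ I : Ideal R,
    s • N ≤ I • (⊤ : Submodule R M) ∧ I • (⊤ : Submodule R M) ≤ N

/-- The submodule `(N :_M I) = {m ∈ M : I m ⊆ N}`. -/
def Submodule.mcolon {R M : Type*} [CommRing R] [AddCommGroup M] [Module R M]
    (N : Submodule R M) (I : Ideal R) : Submodule R M where
  carrier := {m : M | ∀ a ∈ I, a • m ∈ N}
  zero_mem' := fun a _ => by simp
  add_mem' := fun hx hy a ha => by
    rw [smul_add]; exact N.add_mem (hx a ha) (hy a ha)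
  smul_mem' := fun c m hm a ha => by
    rw [smul_comm]; exact N.smul_mem c (hm a ha)

/-- `N` is an `S`-copure submodule of `M` if there is `s ∈ S` with
`s(N :_M I) ⊆ N + (0 :_M I)` for every ideal `I` of `R`. -/
def Submodule.SCopure {R M : Type*} [CommRing R] [AddCommGroup M] [Module R M]
    (S : Submonoid R) (N : Submodule R M) : Prop :=
  ∃ s ∈ S, ∀ I : Ideal R, s • N.mcolon I ≤ N ⊔ (⊥ : Submodule R M).mcolon I

/-- If `M` is an `S`-multiplication module and `N` is an `S`-copure submodule of `M`,
then `N` is an `S`-idempotent submodule of `M`. -/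
theorem sIdempotent_of_sCopure
    {R M : Type*} [CommRing R] [AddCommGroup M] [Module R M] (S : Submonoid R)
    (hM : Module.SMultiplication R M S) (N : Submodule R M) (hN : N.SCopure S) :
    N.SIdempotent S := by
  obtain ⟨s₁, hs₁, I, h1, h2⟩ := hM N
  obtain ⟨s₂, hs₂, hc⟩ := hN
  set J := N.colon ⊤ with hJ
  have hIJ : I ≤ J := by
    intro a ha
    rw [hJ, Submodule.mem_colon]
    intro m _
    exact h2 (Submodule.smul_mem_smul ha Submodule.mem_top)
  have hJtop : J • (⊤ : Submodule R M) ≤ N := by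
    apply Submodule.smul_le.2
    intro a ha m hm
    exact (Submodule.mem_colon.1 ha) m hm
  have hsq : J ^ 2 • (⊤ : Submodule R M) ≤ N := by
    rw [pow_two, ← smul_eq_mul, Submodule.smul_assoc]
    exact (smul_mono_right J hJtop).trans ((smul_mono_right J le_top).trans hJtop)
  refine ⟨s₁ * s₁ * s₂, S.mul_mem (S.mul_mem hs₁ hs₁) hs₂, ?_, hsq⟩
  -- ⊤ ≤ N.mcolon I
  have htop : ∀ m : M, m ∈ N.mcolon I := by
    intro m a ha
    exact h2 (Submodule.smul_mem_smul ha Submodule.mem_top)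
  -- claim2 : s₂ • x ∈ I • N for x ∈ I • ⊤
  have claim2 : ∀ x ∈ I • (⊤ : Submodule R M), s₂ • x ∈ I • N := by
    intro x hx
    refine Submodule.smul_induction_on hx ?_ ?_
    · intro a ha m _
      have hm2 : s₂ • m ∈ N ⊔ (⊥ : Submodule R M).mcolon I :=
        hc I (Submodule.smul_mem_pointwise_smul m s₂ _ (htop m))
      obtain ⟨n, hn, z, hz, hnz⟩ := Submodule.mem_sup.1 hm2
      have haz : a • z = 0 := hz a ha
      have : s₂ • a • m = a • n := by
        rw [smul_comm, ← hnz, smul_add, haz, add_zero]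
      rw [this]
      exact Submodule.smul_mem_smul ha hn
    · intro x y hx hy
      rw [smul_add]; exact Submodule.add_mem _ hx hy
  -- claim3 : s₁ • x ∈ J ^ 2 • ⊤ for x ∈ I • N
  have claim3 : ∀ x ∈ I • N, s₁ • x ∈ J ^ 2 • (⊤ : Submodule R M) := by
    intro x hx
    rw [pow_two, ← smul_eq_mul, Submodule.smul_assoc]
    refine Submodule.smul_induction_on hx ?_ ?_
    · intro a ha n hn
      have hs1n : s₁ • n ∈ J • (⊤ : Submodule R M) :=
        Submodule.smul_mono_left hIJ
          (h1 (Submodule.smul_mem_pointwise_smul n s₁ N hn))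
      rw [smul_comm s₁ a n]
      exact Submodule.smul_mem_smul (hIJ ha) hs1n
    · intro x y hx hy
      rw [smul_add]; exact Submodule.add_mem _ hx hy
  intro x hx
  obtain ⟨n, hn, rfl⟩ := Set.mem_smul_set.1 hx
  have : (s₁ * s₁ * s₂) • n = s₁ • s₂ • s₁ • n := by
    rw [← mul_smul, ← mul_smul]; ring_nf
  rw [this]
  exact claim3 _ (claim2 _ (h1 (Submodule.smul_mem_pointwise_smul n s₁ N hn)))
end
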